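/- arXiv:2502.10799 — 8 statements merged into one kernel-verified Lean document; each statement's English description precedes it below -/
import Mathlib

section
/- If (σ, χ) and (τ, η) are outer-twists of ρ, then (σ∘τ, (σ∘η)·χ⁻¹) is an inner-twist of ρ, where (σ∘η)·χ⁻¹ is the character g ↦ σ(η(g))·χ(g)⁻¹. In particular, the product of two outer-twists is an inner-twist. (Used for parts (iii) and (iv) of the paper's Lemma on basic properties of extra-twists.) -/
/- Setting: `G` a group, `k` a commutative ring, representations `G → GLₙ(k)`. -/

open Matrix

variable {G k : Type*} [Group G] [CommRing k] {n : ℕ}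

/-- Two `GL n k`-valued functions are conjugate if they differ by conjugation by a
fixed element `α` of `GLₙ(k)`. -/
def ConjRep (ρ₁ ρ₂ : G → GL (Fin n) k) : Prop :=
  ∃ α : GL (Fin n) k, ∀ g, ρ₂ g = α * ρ₁ g * α⁻¹

/-- The twist `ρ ⊗ χ` of `ρ` by a character `χ`, `g ↦ χ(g) • ρ(g)`. -/
def twistRep (ρ : G → GL (Fin n) k) (χ : G →* kˣ) : G → GL (Fin n) k :=
  fun g => χ g • ρ g

/-- The transpose of an element of `GLₙ(k)`. -/
def GLtranspose (A : GL (Fin n) k) : GL (Fin n) k where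
  val := (A : Matrix (Fin n) (Fin n) k)ᵀ
  inv := ((A⁻¹ : GL (Fin n) k) : Matrix (Fin n) (Fin n) k)ᵀ
  val_inv := by
    rw [← Matrix.transpose_mul]
    have : ((A⁻¹ : GL (Fin n) k) : Matrix (Fin n) (Fin n) k) *
        (A : Matrix (Fin n) (Fin n) k) = 1 := by
      simp [congrArg Units.val (inv_mul_cancel A)]
    rw [this, Matrix.transpose_one]
  inv_val := by
    rw [← Matrix.transpose_mul]
    have : (A : Matrix (Fin n) (Fin n) k) *
        ((A⁻¹ : GL (Fin n) k) : Matrix (Fin n) (Fin n) k) = 1 := by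
      simp [congrArg Units.val (mul_inv_cancel A)]
    rw [this, Matrix.transpose_one]

/-- The dual `ρ^∨` (inverse-transpose) of a representation, `g ↦ (ρ(g)⁻¹)ᵀ`. -/
def dualRep (ρ : G → GL (Fin n) k) : G → GL (Fin n) k :=
  fun g => GLtranspose (ρ g)⁻¹

/-- Entrywise application of the ring automorphism `σ` to `ρ`, i.e. `ˢρ`. -/
def sigmaRep (σ : RingAut k) (ρ : G → GL (Fin n) k) : G → GL (Fin n) k :=
  fun g => Matrix.GeneralLinearGroup.map σ (ρ g)

/-- The character `σ ∘ χ`, `g ↦ σ(χ(g))`. -/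
def sigmaChar (σ : RingAut k) (χ : G →* kˣ) : G →* kˣ :=
  (Units.map σ.toRingHom.toMonoidHom).comp χ

/-- `(σ, χ)` is an inner-twist of `ρ` : `ˢρ` is conjugate to `ρ ⊗ χ`. -/
def IsInnerTwist (ρ : G →* GL (Fin n) k) (σ : RingAut k) (χ : G →* kˣ) : Prop :=
  ConjRep (sigmaRep σ ρ) (twistRep ρ χ)

/-- `(τ, η)` is an outer-twist of `ρ` : `ᵗρ` is conjugate to `ρ^∨ ⊗ η`. -/
def IsOuterTwist (ρ : G →* GL (Fin n) k) (τ : RingAut k) (η : G →* kˣ) : Prop :=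
  ConjRep (sigmaRep τ ρ) (twistRep (dualRep ρ) η)

/-- `ρ` is non-self-twist: any character by which `ρ` is a twist of itself is trivial. -/
def NonSelfTwist (ρ : G →* GL (Fin n) k) : Prop :=
  ∀ χ : G →* kˣ, ConjRep (⇑ρ) (twistRep ρ χ) → χ = 1

/-- `ρ` is non-essentially-self-dual: `ρ` is not conjugate to any character twist
of its dual. -/
def NonEssSelfDual (ρ : G →* GL (Fin n) k) : Prop :=
  ¬ ∃ η : G →* kˣ, ConjRep (⇑ρ) (twistRep (dualRep ρ) η)

def dGL : GL (Fin n) k →* GL (Fin n) k where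
  toFun X := GLtranspose X⁻¹
  map_one' := by
    apply Units.ext
    simp [GLtranspose]
  map_mul' X Y := by
    apply Units.ext
    simp [GLtranspose, _root_.mul_inv_rev, Matrix.transpose_mul]

lemma dGL_dGL (X : GL (Fin n) k) : dGL (dGL X) = X := by
  apply Units.ext
  have h : (dGL X)⁻¹ = dGL X⁻¹ := (map_inv dGL X).symm
  show (((dGL X)⁻¹ : GL (Fin n) k) : Matrix (Fin n) (Fin n) k)ᵀ = X
  rw [h]
  show ((((X⁻¹)⁻¹ : GL (Fin n) k) : Matrix (Fin n) (Fin n) k)ᵀ)ᵀ = X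
  rw [inv_inv, Matrix.transpose_transpose]

/-- scalar units as a hom into GL -/
def sGL : kˣ →* GL (Fin n) k where
  toFun c := c • 1
  map_one' := one_smul _ _
  map_mul' c d := by
    apply Units.ext
    show ((c*d : kˣ) : k) • (1 : Matrix (Fin n) (Fin n) k) = ((c:k) • (1:Matrix (Fin n) (Fin n) k)) * ((d:k) • 1)
    simp [smul_smul, mul_comm]

lemma smul_eq_sGL (c : kˣ) (X : GL (Fin n) k) : c • X = sGL c * X := by
  apply Units.ext
  show (c:k) • (X : Matrix (Fin n) (Fin n) k) = ((c:k) • (1:Matrix (Fin n) (Fin n) k)) * X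
  rw [Matrix.smul_mul, Matrix.one_mul]

lemma sGL_comm (c : kˣ) (X : GL (Fin n) k) : sGL c * X = X * sGL c := by
  apply Units.ext
  show ((c:k) • (1:Matrix (Fin n) (Fin n) k)) * X = (X : Matrix (Fin n) (Fin n) k) * ((c:k) • 1)
  rw [Matrix.smul_mul, Matrix.mul_smul, Matrix.one_mul, Matrix.mul_one]

lemma dGL_sGL (c : kˣ) : dGL (sGL c : GL (Fin n) k) = sGL c⁻¹ := by
  apply Units.ext
  show ((((sGL c)⁻¹ : GL (Fin n) k) : Matrix (Fin n) (Fin n) k))ᵀ = _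
  rw [← map_inv sGL c]
  show (((c⁻¹:kˣ):k) • (1:Matrix (Fin n) (Fin n) k))ᵀ = ((c⁻¹:kˣ):k) • 1
  rw [Matrix.transpose_smul, Matrix.transpose_one]

lemma mapGL_sGL (σ : RingAut k) (c : kˣ) :
    Matrix.GeneralLinearGroup.map (σ : k →+* k) (sGL c : GL (Fin n) k) = sGL (Units.map σ.toRingHom.toMonoidHom c) := by
  apply Units.ext
  show (((c:k) • (1:Matrix (Fin n) (Fin n) k))).map σ = (σ (c:k)) • (1:Matrix (Fin n) (Fin n) k)
  ext i j
  by_cases h : i = j <;> simp [h, Matrix.map_apply, Matrix.one_apply]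

lemma mapGL_dGL (σ : RingAut k) (X : GL (Fin n) k) :
    Matrix.GeneralLinearGroup.map (σ : k →+* k) (dGL X) = dGL (Matrix.GeneralLinearGroup.map (σ : k →+* k) X) := by
  apply Units.ext
  show ((((X⁻¹ : GL (Fin n) k) : Matrix (Fin n) (Fin n) k))ᵀ).map σ
      = (((Matrix.GeneralLinearGroup.map (σ : k →+* k) X)⁻¹ : GL (Fin n) k) : Matrix (Fin n) (Fin n) k)ᵀ
  rw [← map_inv (Matrix.GeneralLinearGroup.map (σ : k →+* k)) X]
  show ((((X⁻¹ : GL (Fin n) k) : Matrix (Fin n) (Fin n) k))ᵀ).map σ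
      = ((((X⁻¹ : GL (Fin n) k) : Matrix (Fin n) (Fin n) k)).map σ)ᵀ
  rw [Matrix.transpose_map]

lemma mapGL_mul_apply (σ τ : RingAut k) (X : GL (Fin n) k) :
    Matrix.GeneralLinearGroup.map ((σ * τ : RingAut k) : k →+* k) X
      = Matrix.GeneralLinearGroup.map (σ : k →+* k) (Matrix.GeneralLinearGroup.map (τ : k →+* k) X) := by
  apply Units.ext
  show (X : Matrix (Fin n) (Fin n) k).map (σ * τ : RingAut k)
      = ((X : Matrix (Fin n) (Fin n) k).map τ).map σ
  ext i j; rfl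

lemma pull (c : kˣ) (Y Z W : GL (Fin n) k) : Y * (sGL c * Z) * W = sGL c * (Y * Z * W) := by
  rw [← mul_assoc Y, ← sGL_comm]
  simp [mul_assoc]

lemma sGL_comm' (c : kˣ) (Y Z : GL (Fin n) k) : Y * (sGL c * Z) = sGL c * (Y * Z) := by
  rw [← mul_assoc, ← sGL_comm, mul_assoc]

lemma conj_cancel (A B X : GL (Fin n) k) (u v : kˣ) :
    (A * B) * (B⁻¹ * (sGL u * (A⁻¹ * (sGL v * X) * A)) * B) * (A * B)⁻¹
      = sGL (u * v) * X := by
  rw [pull v A⁻¹ X A, ← mul_assoc (sGL u), ← _root_.map_mul sGL, pull, pull]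
  congr 1
  group

/-- the composition of two outer-twists `(σ, χ)` and `(τ, η)` is the
inner-twist `(σ∘τ, (σ∘η)·χ⁻¹)`. -/
theorem outer_comp_outer
    (hn : 1 ≤ n) (ρ : G →* GL (Fin n) k)
    (σ τ : RingAut k) (χ η : G →* kˣ)
    (hσ : IsOuterTwist ρ σ χ) (hτ : IsOuterTwist ρ τ η) :
    IsInnerTwist ρ (σ * τ) (sigmaChar σ η * χ⁻¹) := by
  obtain ⟨α, hα⟩ := hσ
  obtain ⟨β, hβ⟩ := hτ
  refine ⟨dGL α * Matrix.GeneralLinearGroup.map (σ : k →+* k) β, fun g => ?_⟩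
  have hA : Matrix.GeneralLinearGroup.map (σ : k →+* k) (ρ g)
      = α⁻¹ * (sGL (χ g) * dGL (ρ g)) * α := by
    have h := hα g
    rw [show twistRep (dualRep ρ) χ g = sGL (χ g) * dGL (ρ g) from smul_eq_sGL _ _] at h
    rw [show sigmaRep σ ρ g = Matrix.GeneralLinearGroup.map (σ : k →+* k) (ρ g) from rfl] at h
    rw [h]
    group
  have hB : Matrix.GeneralLinearGroup.map (τ : k →+* k) (ρ g)
      = β⁻¹ * (sGL (η g) * dGL (ρ g)) * β := by
    have h := hβ g
    rw [show twistRep (dualRep ρ) η g = sGL (η g) * dGL (ρ g) from smul_eq_sGL _ _] at h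
    rw [show sigmaRep τ ρ g = Matrix.GeneralLinearGroup.map (τ : k →+* k) (ρ g) from rfl] at h
    rw [h]
    group
  have key : sigmaRep (σ * τ) ρ g
      = (Matrix.GeneralLinearGroup.map (σ : k →+* k) β)⁻¹ *
          (sGL (Units.map σ.toRingHom.toMonoidHom (η g)) *
            ((dGL α)⁻¹ * (sGL (χ g)⁻¹ * ρ g) * dGL α)) *
          Matrix.GeneralLinearGroup.map (σ : k →+* k) β := by
    rw [show sigmaRep (σ * τ) ρ g
        = Matrix.GeneralLinearGroup.map ((σ * τ : RingAut k) : k →+* k) (ρ g) from rfl,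
      mapGL_mul_apply, hB]
    simp only [_root_.map_mul, _root_.map_inv]
    rw [mapGL_sGL, mapGL_dGL, hA]
    simp only [_root_.map_mul, _root_.map_inv]
    rw [dGL_sGL, dGL_dGL, _root_.map_inv sGL]
  rw [key]
  rw [show twistRep ρ (sigmaChar σ η * χ⁻¹) g
      = sGL (Units.map σ.toRingHom.toMonoidHom (η g) * (χ g)⁻¹) * ρ g from smul_eq_sGL _ _]
  exact (conj_cancel (dGL α) (Matrix.GeneralLinearGroup.map (σ : k →+* k) β) (ρ g) _ _).symm
end

section
/- If (σ, χ) is an inner-twist of ρ and (τ, η) is an outer-twist of ρ, then (σ∘τ, (σ∘η)·χ⁻¹) is an outer-twist of ρ, where (σ∘η)·χ⁻¹ is the character g ↦ σ(η(g))·χ(g)⁻¹. (The mixed composition law, part (iii) of the paper's Lemma on basic properties of extra-twists.) -/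
/- Setting: `G` a group, `k` a commutative ring, representations `G → GLₙ(k)`. -/

open Matrix

variable {G k : Type*} [Group G] [CommRing k] {n : ℕ}

section Helpers

lemma GL_smul_mul_smul (c d : kˣ) (A B : GL (Fin n) k) :
    (c • A) * (d • B) = (c * d) • (A * B) := by
  ext : 1
  show ((c:k) • (A : Matrix (Fin n) (Fin n) k)) * ((d:k) • (B : Matrix (Fin n) (Fin n) k)) =
    ((c:k) * (d:k)) • ((A : Matrix (Fin n) (Fin n) k) * (B : Matrix (Fin n) (Fin n) k))
  rw [Matrix.smul_mul, Matrix.mul_smul, smul_smul]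

lemma GL_mul_smul (c : kˣ) (A B : GL (Fin n) k) : A * (c • B) = c • (A * B) := by
  conv_lhs => rw [← one_smul kˣ A]
  rw [GL_smul_mul_smul, one_mul]

lemma GL_smul_mul (c : kˣ) (A B : GL (Fin n) k) : (c • A) * B = c • (A * B) := by
  conv_lhs => rw [← one_smul kˣ B]
  rw [GL_smul_mul_smul, mul_one]

lemma GL_smul_inv (c : kˣ) (A : GL (Fin n) k) : (c • A)⁻¹ = c⁻¹ • A⁻¹ := by
  apply inv_eq_of_mul_eq_one_right
  rw [GL_smul_mul_smul, mul_inv_cancel, mul_inv_cancel, one_smul]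

lemma GL_transpose_mul (A B : GL (Fin n) k) :
    GLtranspose (A * B) = GLtranspose B * GLtranspose A := by
  ext : 1; exact Matrix.transpose_mul _ _

lemma GL_transpose_inv (A : GL (Fin n) k) : GLtranspose A⁻¹ = (GLtranspose A)⁻¹ :=
  Units.ext rfl

lemma GL_transpose_smul (c : kˣ) (A : GL (Fin n) k) :
    GLtranspose (c • A) = c • GLtranspose A := by
  ext : 1; exact Matrix.transpose_smul _ _

lemma GL_map_smul (σ : RingAut k) (c : kˣ) (A : GL (Fin n) k) :
    Matrix.GeneralLinearGroup.map (n := Fin n) (σ : k →+* k) (c • A) =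
      (Units.map σ.toRingHom.toMonoidHom c) •
        Matrix.GeneralLinearGroup.map (σ : k →+* k) A := by
  ext i j : 3
  show σ ((c:k) • (A : Matrix (Fin n) (Fin n) k) i j) =
    (σ (c:k)) • ((A : Matrix (Fin n) (Fin n) k).map σ) i j
  simp [smul_eq_mul]

lemma GL_map_transpose (σ : RingAut k) (A : GL (Fin n) k) :
    Matrix.GeneralLinearGroup.map (n := Fin n) (σ : k →+* k) (GLtranspose A) =
      GLtranspose (Matrix.GeneralLinearGroup.map (σ : k →+* k) A) := by
  ext : 1
  exact Matrix.transpose_map.symm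

lemma GL_map_comp (σ τ : RingAut k) (A : GL (Fin n) k) :
    Matrix.GeneralLinearGroup.map (n := Fin n) ((σ * τ : RingAut k) : k →+* k) A =
      Matrix.GeneralLinearGroup.map (σ : k →+* k)
        (Matrix.GeneralLinearGroup.map (τ : k →+* k) A) := by
  ext : 1; rfl

end Helpers

/-- the composition of an inner-twist `(σ, χ)` and an outer-twist `(τ, η)`
is the outer-twist `(σ∘τ, (σ∘η)·χ⁻¹)`. -/
theorem inner_comp_outer
    (hn : 1 ≤ n) (ρ : G →* GL (Fin n) k)
    (σ τ : RingAut k) (χ η : G →* kˣ)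
    (hσ : IsInnerTwist ρ σ χ) (hτ : IsOuterTwist ρ τ η) :
    IsOuterTwist ρ (σ * τ) (sigmaChar σ η * χ⁻¹) := by
  obtain ⟨α, hα⟩ := hσ
  obtain ⟨β, hβ⟩ := hτ
  set σβ := Matrix.GeneralLinearGroup.map (σ : k →+* k) β with hσβ
  refine ⟨(GLtranspose α)⁻¹ * σβ, fun g => ?_⟩
  have hmapσ : ∀ A : GL (Fin n) k, sigmaRep σ (fun _ : G => A) g =
      Matrix.GeneralLinearGroup.map (σ : k →+* k) A := fun _ => rfl
  -- from hα : χ g • ρ g = α * σ(ρ g) * α⁻¹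
  have h1 : Matrix.GeneralLinearGroup.map (σ : k →+* k) (ρ g) =
      α⁻¹ * (χ g • ρ g) * α := by
    have := hα g
    simp only [twistRep, sigmaRep] at this
    rw [this]; group
  have h2 : Matrix.GeneralLinearGroup.map (τ : k →+* k) (ρ g) =
      β⁻¹ * (η g • dualRep ρ g) * β := by
    have := hβ g
    simp only [twistRep, sigmaRep] at this
    rw [this]; group
  show (sigmaChar σ η * χ⁻¹) g • dualRep ρ g =
    ((GLtranspose α)⁻¹ * σβ) * Matrix.GeneralLinearGroup.map ((σ * τ : RingAut k) : k →+* k) (ρ g) *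
      ((GLtranspose α)⁻¹ * σβ)⁻¹
  rw [GL_map_comp, h2]
  rw [_root_.map_mul, _root_.map_mul, _root_.map_inv, ← hσβ]
  rw [show Matrix.GeneralLinearGroup.map (σ : k →+* k) (η g • dualRep ρ g) =
        sigmaChar σ η g • GLtranspose ((Matrix.GeneralLinearGroup.map (σ : k →+* k) (ρ g))⁻¹) by
      rw [GL_map_smul]
      congr 1]
  rw [h1]
  have conj_inv : ∀ a x : GL (Fin n) k, (a⁻¹ * x * a)⁻¹ = a⁻¹ * x⁻¹ * a := by
    intro a x; group
  rw [conj_inv, GL_smul_inv, GL_transpose_mul, GL_transpose_mul, GL_transpose_smul,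
    GL_transpose_inv α]
  simp only [GL_mul_smul, GL_smul_mul, smul_smul]
  have hch : (sigmaChar σ η * χ⁻¹) g = sigmaChar σ η g * (χ g)⁻¹ := rfl
  rw [hch]
  simp only [dualRep]
  congr 1
  group
end

section
/- Let ε, ω : G → kˣ be characters and m an integer such that det(ρ(g)) = ε(g)^m · ω(g) for all g ∈ G, suppose ω has finite order (there is N ≥ 1 with ω(g)^N = 1 for all g), and let σ be a ring automorphism of k with σ(ε(g)) = ε(g) for all g ∈ G. If (σ, χ) is an inner-twist of ρ, then χ(g)ⁿ = σ(ω(g))·ω(g)⁻¹ for all g ∈ G; consequently χ has finite order (χ(g)^{nN} = 1 for all g). (Part (v) of the paper's Lemma on basic properties of extra-twists: the character of an inner-twist of an algebraic automorphic Galois representation over a totally real field is finite.) -/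
/- Setting: `G` a group, `k` a commutative ring, representations `G → GLₙ(k)`. -/

open Matrix

variable {G k : Type*} [Group G] [CommRing k] {n : ℕ}

/-- if `det ∘ ρ = ε^m · ω` with `ω` of finite order `N` and `σ` fixes the
values of `ε`, then the character `χ` of any inner-twist `(σ, χ)` satisfies
`χ(g)ⁿ = σ(ω(g))·ω(g)⁻¹` for all `g`; consequently `χ(g)^(n·N) = 1` for all `g`. -/
theorem inner_twist_character_finite
    (hn : 1 ≤ n) (ρ : G →* GL (Fin n) k)
    (ε ω : G →* kˣ) (m : ℤ)
    (hdet : ∀ g : G, Matrix.GeneralLinearGroup.det (ρ g) = ε g ^ m * ω g)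
    (N : ℕ) (hN : 1 ≤ N) (hω : ∀ g : G, ω g ^ N = 1)
    (σ : RingAut k) (hσε : ∀ g : G, σ (ε g : k) = (ε g : k))
    (χ : G →* kˣ) (hχ : IsInnerTwist ρ σ χ) :
    (∀ g : G, χ g ^ n = sigmaChar σ ω g * (ω g)⁻¹) ∧
      (∀ g : G, χ g ^ (n * N) = 1) := by
  obtain ⟨α, hα⟩ := hχ
  have hdet_sigma : ∀ g : G, Matrix.GeneralLinearGroup.det (sigmaRep σ ρ g)
      = Units.map σ.toRingHom.toMonoidHom (Matrix.GeneralLinearGroup.det (ρ g)) := by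
    intro g
    ext
    simp [sigmaRep, Matrix.GeneralLinearGroup.map, RingHom.map_det]
  have hdet_twist : ∀ g : G, Matrix.GeneralLinearGroup.det (twistRep (⇑ρ) χ g)
      = χ g ^ n * Matrix.GeneralLinearGroup.det (ρ g) := by
    intro g
    ext
    simp [twistRep, Matrix.det_smul, Units.smul_def]
  have hεfix : ∀ g : G, Units.map σ.toRingHom.toMonoidHom (ε g) = ε g := by
    intro g
    ext
    exact hσε g
  have key : ∀ g : G, χ g ^ n = sigmaChar σ ω g * (ω g)⁻¹ := by
    intro g
    have h1 : Matrix.GeneralLinearGroup.det (sigmaRep σ ρ g)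
        = Matrix.GeneralLinearGroup.det (twistRep (⇑ρ) χ g) := by
      rw [hα g, _root_.map_mul, _root_.map_mul, map_inv, mul_right_comm, mul_inv_cancel, one_mul]
    rw [hdet_sigma, hdet_twist, hdet] at h1
    have h2 : ε g ^ m * Units.map σ.toRingHom.toMonoidHom (ω g)
        = χ g ^ n * (ε g ^ m * ω g) := by
      rw [← h1, _root_.map_mul, map_zpow, hεfix]
    have h3 : Units.map σ.toRingHom.toMonoidHom (ω g) = χ g ^ n * ω g := by
      have := mul_left_cancel (a := ε g ^ m)
        (by rw [h2, mul_left_comm] : ε g ^ m * Units.map σ.toRingHom.toMonoidHom (ω g)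
          = ε g ^ m * (χ g ^ n * ω g))
      exact this
    rw [sigmaChar]
    simp only [MonoidHom.comp_apply]
    rw [h3, mul_assoc, mul_inv_cancel, mul_one]
  refine ⟨key, fun g => ?_⟩
  have : χ g ^ (n * N) = (sigmaChar σ ω g * (ω g)⁻¹) ^ N := by
    rw [pow_mul, key g]
  rw [this, mul_pow, inv_pow, hω g, inv_one, mul_one, sigmaChar]
  simp only [MonoidHom.comp_apply]
  rw [← map_pow, hω g, _root_.map_one]
end

section
/- Let N be a normal subgroup of a group G, let k be an algebraically closed field, let V be a nonzero finite-dimensional k-vector space, and let ρ₁, ρ₂ : G → GL(V) be group homomorphisms. Suppose the restrictions of ρ₁ and ρ₂ to N are isomorphic (there is a k-linear automorphism φ of V with φ ∘ ρ₁(h) = ρ₂(h) ∘ φ for all h ∈ N), and that the restriction of ρ₂ to N is irreducible (the only subspaces of V invariant under ρ₂(h) for all h ∈ N are 0 and V). Then there exists a character φ₀ : G → kˣ and a k-linear automorphism ψ of V such that ψ ∘ ρ₁(g) = φ₀(g) • (ρ₂(g) ∘ ψ) for all g ∈ G, i.e. ρ₁ is isomorphic to the twist of ρ₂ by the character φ₀.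 (The paper's Lemma: two representations of G that become isomorphic on a normal subgroup, on which one of them is absolutely irreducible, differ by a twist by a character.) -/
private lemma schur_aux' {G : Type*} [Group G] {k V : Type*} [Field k] [IsAlgClosed k]
    [AddCommGroup V] [Module k V] [FiniteDimensional k V] [Nontrivial V]
    (N : Subgroup G) (ρ₂ : G →* (V ≃ₗ[k] V))
    (hirr : ∀ W : Submodule k V, (∀ h ∈ N, ∀ v ∈ W, ρ₂ h v ∈ W) → W = ⊥ ∨ W = ⊤)
    (T : V →ₗ[k] V) (hT : ∀ h ∈ N, ∀ v, T (ρ₂ h v) = ρ₂ h (T v)) :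
    ∃ c : k, ∀ v, T v = c • v := by
  obtain ⟨c, hc⟩ := Module.End.exists_eigenvalue T
  refine ⟨c, ?_⟩
  set W := Module.End.eigenspace T c with hW
  have hinv : ∀ h ∈ N, ∀ v ∈ W, ρ₂ h v ∈ W := by
    intro h hh v hv
    rw [hW, Module.End.mem_eigenspace_iff] at hv ⊢
    rw [hT h hh, hv, map_smul]
  rcases hirr W hinv with h0 | htop
  · exact absurd h0 hc
  · intro v
    have : v ∈ W := htop ▸ Submodule.mem_top
    rwa [hW, Module.End.mem_eigenspace_iff] at this

/-- if two representations of `G` on a nonzero finite-dimensional vector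
space over an algebraically closed field become isomorphic on a normal subgroup `N`, on
which the second one is irreducible, then the first is isomorphic to a twist of the
second by a character of `G`. -/
theorem twist_by_character_of_iso_on_normal_subgroup
    {G : Type*} [Group G] {k V : Type*} [Field k] [IsAlgClosed k]
    [AddCommGroup V] [Module k V] [FiniteDimensional k V] [Nontrivial V]
    (N : Subgroup G) [N.Normal]
    (ρ₁ ρ₂ : G →* (V ≃ₗ[k] V))
    (hiso : ∃ φ : V ≃ₗ[k] V, ∀ h ∈ N, ∀ v : V, φ (ρ₁ h v) = ρ₂ h (φ v))
    (hirr : ∀ W : Submodule k V, (∀ h ∈ N, ∀ v ∈ W, ρ₂ h v ∈ W) → W = ⊥ ∨ W = ⊤) :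
    ∃ (φ₀ : G →* kˣ) (ψ : V ≃ₗ[k] V), ∀ (g : G) (v : V),
      ψ (ρ₁ g v) = φ₀ g • (ρ₂ g (ψ v)) := by
  obtain ⟨φ, hφ⟩ := hiso
  -- inverse of ρ₂ applied pointwise
  have hρ₂inv : ∀ (g : G) (x : V), ρ₂ g (ρ₂ g⁻¹ x) = x := by
    intro g x
    have h1 : ρ₂ g * ρ₂ g⁻¹ = 1 := by rw [← map_mul, mul_inv_cancel, map_one]
    calc ρ₂ g (ρ₂ g⁻¹ x) = (ρ₂ g * ρ₂ g⁻¹) x := rfl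
      _ = x := by rw [h1]; rfl
  have hρ₂inv' : ∀ (g : G) (x : V), ρ₂ g⁻¹ (ρ₂ g x) = x := by
    intro g x
    have h1 : ρ₂ g⁻¹ * ρ₂ g = 1 := by rw [← map_mul, inv_mul_cancel, map_one]
    calc ρ₂ g⁻¹ (ρ₂ g x) = (ρ₂ g⁻¹ * ρ₂ g) x := rfl
      _ = x := by rw [h1]; rfl
  have hmapp : ∀ (ρ : G →* (V ≃ₗ[k] V)) (a b : G) (x : V), ρ (a * b) x = ρ a (ρ b x) := by
    intro ρ a b x; rw [map_mul]; rfl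
  have hφsymm : ∀ h ∈ N, ∀ w : V, φ.symm (ρ₂ h w) = ρ₁ h (φ.symm w) := by
    intro h hh w
    apply φ.injective
    rw [hφ h hh, LinearEquiv.apply_symm_apply, LinearEquiv.apply_symm_apply]
  -- key: for each g there is a scalar c with φ (ρ₁ g v) = c • ρ₂ g (φ v)
  have key : ∀ g : G, ∃ c : k, ∀ v : V, φ (ρ₁ g v) = c • ρ₂ g (φ v) := by
    intro g
    set T : V →ₗ[k] V :=
      (ρ₂ g⁻¹).toLinearMap ∘ₗ φ.toLinearMap ∘ₗ (ρ₁ g).toLinearMap ∘ₗ φ.symm.toLinearMap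
      with hTdef
    have hTapp : ∀ w, T w = ρ₂ g⁻¹ (φ (ρ₁ g (φ.symm w))) := fun w => rfl
    have hT : ∀ h ∈ N, ∀ w, T (ρ₂ h w) = ρ₂ h (T w) := by
      intro h hh w
      have hh' : g * h * g⁻¹ ∈ N := Subgroup.Normal.conj_mem ‹N.Normal› h hh g
      rw [hTapp, hTapp, hφsymm h hh w]
      have e1 : ρ₁ g (ρ₁ h (φ.symm w)) = ρ₁ (g * h * g⁻¹) (ρ₁ g (φ.symm w)) := by
        have hgr : (g * h * g⁻¹) * g = g * h := by group
        rw [← hmapp ρ₁ g h, ← hmapp ρ₁ (g * h * g⁻¹) g, hgr]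
      rw [e1, hφ _ hh']
      have e2 : ρ₂ g⁻¹ (ρ₂ (g * h * g⁻¹) (φ (ρ₁ g (φ.symm w))))
          = ρ₂ h (ρ₂ g⁻¹ (φ (ρ₁ g (φ.symm w)))) := by
        have hgr : g⁻¹ * (g * h * g⁻¹) = h * g⁻¹ := by group
        rw [← hmapp ρ₂ g⁻¹ (g * h * g⁻¹), hgr, hmapp ρ₂ h g⁻¹]
      rw [e2]
    obtain ⟨c, hc⟩ := schur_aux' N ρ₂ hirr T hT
    refine ⟨c, fun v => ?_⟩
    have := hc (φ v)
    rw [hTapp, LinearEquiv.symm_apply_apply] at this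
    have := congrArg (ρ₂ g) this
    rwa [hρ₂inv, map_smul] at this
  choose c hc using key
  obtain ⟨v₀, hv₀⟩ := exists_ne (0 : V)
  have hne : ∀ g : G, c g ≠ 0 := by
    intro g hg0
    have h1 := hc g v₀
    rw [hg0, zero_smul] at h1
    have : ρ₁ g v₀ = 0 := by
      have := φ.map_eq_zero_iff.mp h1
      exact this
    exact hv₀ ((ρ₁ g).map_eq_zero_iff.mp this)
  have hx₀ : ∀ g : G, ρ₂ g (φ v₀) ≠ 0 := by
    intro g hg
    exact hv₀ (φ.map_eq_zero_iff.mp ((ρ₂ g).map_eq_zero_iff.mp hg))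
  have hmul : ∀ g g' : G, c (g * g') = c g * c g' := by
    intro g g'
    have h1 : φ (ρ₁ (g * g') v₀) = c (g * g') • ρ₂ (g * g') (φ v₀) := hc _ v₀
    have h2 : φ (ρ₁ (g * g') v₀) = (c g * c g') • ρ₂ (g * g') (φ v₀) := by
      rw [hmapp ρ₁ g g', hc g, hc g', map_smul, smul_smul, ← hmapp ρ₂ g g']
    exact smul_left_injective k (hx₀ (g * g')) (h1.symm.trans h2)
  refine ⟨MonoidHom.mk' (fun g => Units.mk0 (c g) (hne g))
    (fun g g' => Units.ext (by simp [hmul g g'])), φ, fun g v => ?_⟩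
  rw [hc g v]
  simp [Units.smul_def]
end

section
/- Let L be a Lie algebra over a commutative ring R, and let g, g′, z be Lie subalgebras of L such that: every element of z is central in L (⁅x, y⁆ = 0 for all x ∈ z and y ∈ L); g is contained in the join g′ ⊔ z of Lie subalgebras; g′ is contained in the join g ⊔ z; and g′ is perfect, i.e. the derived subalgebra of g′ (the Lie subalgebra generated by all brackets ⁅x, y⁆ with x, y ∈ g′) equals g′. Then the derived subalgebra of g equals g′. (This is the core of the paper's Lemma comparing the Lie algebra of the image of the Galois representation with that of its determinant-trivialized twist: 𝔤^der = 𝔤′.) -/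
/-- The derived subalgebra of a Lie subalgebra `h` of `L`: the Lie subalgebra of `L`
generated by all brackets `⁅x, y⁆` with `x, y ∈ h`. -/
def derivedSubalgebra {R L : Type*} [CommRing R] [LieRing L] [LieAlgebra R L]
    (h : LieSubalgebra R L) : LieSubalgebra R L :=
  LieSubalgebra.lieSpan R L {m | ∃ x ∈ h, ∃ y ∈ h, ⁅x, y⁆ = m}

/-- If `z` is central, every element of `h ⊔ z` decomposes as `x + c` with `x ∈ h`, `c ∈ z`. -/
lemma mem_sup_decomp {R L : Type*} [CommRing R] [LieRing L] [LieAlgebra R L]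
    (h z : LieSubalgebra R L)
    (hz : ∀ x ∈ z, ∀ y : L, ⁅x, y⁆ = 0) :
    ∀ a ∈ h ⊔ z, ∃ x ∈ h, ∃ c ∈ z, x + c = a := by
  let K : LieSubalgebra R L :=
    { toSubmodule := h.toSubmodule ⊔ z.toSubmodule
      lie_mem' := by
        intro a b ha hb
        obtain ⟨x, hx, c, hc, rfl⟩ := Submodule.mem_sup.mp ha
        obtain ⟨y, hy, d, hd, rfl⟩ := Submodule.mem_sup.mp hb
        have h1 : ⁅c, (y : L) + d⁆ = 0 := hz c hc _
        have h2 : ⁅(x : L), d⁆ = 0 := by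
          rw [← lie_skew, hz d hd x, neg_zero]
        have : ⁅(x : L) + c, y + d⁆ = ⁅x, y⁆ := by
          rw [add_lie, h1, add_zero, lie_add, h2, add_zero]
        rw [this]
        exact Submodule.mem_sup_left (h.lie_mem hx hy) }
  have hle : h ⊔ z ≤ K := sup_le
    (fun a ha => Submodule.mem_sup_left ha) (fun a ha => Submodule.mem_sup_right ha)
  intro a ha
  exact Submodule.mem_sup.mp (hle ha)

/-- if `z` consists of central elements of `L`, `g ≤ g′ ⊔ z`,
`g′ ≤ g ⊔ z`, and `g′` is perfect, then the derived subalgebra of `g` equals `g′`. -/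
theorem derived_subalgebra_eq_of_perfect
    {R L : Type*} [CommRing R] [LieRing L] [LieAlgebra R L]
    (g g' z : LieSubalgebra R L)
    (hz : ∀ x ∈ z, ∀ y : L, ⁅x, y⁆ = 0)
    (h₁ : g ≤ g' ⊔ z) (h₂ : g' ≤ g ⊔ z)
    (hperf : derivedSubalgebra g' = g') :
    derivedSubalgebra g = g' := by
  have key : ∀ (h k : LieSubalgebra R L), h ≤ k ⊔ z →
      ∀ x ∈ h, ∀ y ∈ h, ∃ a ∈ k, ∃ b ∈ k, ⁅(a : L), b⁆ = ⁅x, y⁆ := by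
    intro h k hle x hx y hy
    obtain ⟨a, ha, c, hc, hac⟩ := mem_sup_decomp k z hz x (hle hx)
    obtain ⟨b, hb, d, hd, hbd⟩ := mem_sup_decomp k z hz y (hle hy)
    refine ⟨a, ha, b, hb, ?_⟩
    have h1 : ⁅c, (b : L) + d⁆ = 0 := hz c hc _
    have h2 : ⁅(a : L), d⁆ = 0 := by rw [← lie_skew, hz d hd a, neg_zero]
    rw [← hac, ← hbd, add_lie, h1, add_zero, lie_add, h2, add_zero]
  apply le_antisymm
  · -- derived g ≤ g'
    apply LieSubalgebra.lieSpan_le.mpr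
    rintro m ⟨x, hx, y, hy, rfl⟩
    obtain ⟨a, ha, b, hb, hab⟩ := key g g' h₁ x hx y hy
    rw [← hab]
    exact g'.lie_mem ha hb
  · -- g' = derived g' ≤ derived g
    conv_lhs => rw [← hperf]
    apply LieSubalgebra.lieSpan_le.mpr
    rintro m ⟨x, hx, y, hy, rfl⟩
    obtain ⟨a, ha, b, hb, hab⟩ := key g' g h₂ x hx y hy
    rw [← hab]
    exact LieSubalgebra.subset_lieSpan ⟨a, ha, b, hb, rfl⟩
end

section
/- Let k be a field, V a 2-dimensional k-vector space, G a group, and ρ : G → GL(V) a homomorphism with no G-invariant subspace other than 0 and V. Let N be a normal subgroup of G and suppose V = L₁ ⊕ L₂ where L₁, L₂ are 1-dimensional subspaces and there are characters χ₁ ≠ χ₂ : N → kˣ with ρ(h)v = χᵢ(h)·v for all h ∈ N and v ∈ Lᵢ (i = 1, 2). Then H := {g ∈ G : ρ(g)L₁ = L₁} is a subgroup of G of index 2 containing N, and ρ(g)L₁ = L₂ for every g ∈ G not in H. (This is the Clifford-theoretic core of the paper's proof that the Galois representation attached to a non-CM regular algebraic cuspidal automorphic representation of GL₂ is strongly irreducible: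 if the restriction to an open normal subgroup splits as two distinct characters, the representation is induced from an index-2 subgroup.) -/
/-!
Pick `n₀ ∈ N` with `χ₁ n₀ ≠ χ₂ n₀`. Then `ρ n₀` has the two distinct eigenvalues `χ₁ n₀`, `χ₂ n₀`
on `V = L₁ ⊕ L₂`, so its only eigenlines are `L₁` and `L₂`. For `g ∈ G` the line `ρ g L₁` is an
eigenline of `ρ n₀`, since `N` acts on it through the conjugate character `n ↦ χ₁ (g⁻¹ n g)`;
hence the orbit of `L₁` under `G` lies in `{L₁, L₂}`. By irreducibility `L₁` is not `G`-stable,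
so the orbit is exactly `{L₁, L₂}` and its stabilizer has index `2`.
-/

open scoped Pointwise

namespace Submodule

variable {K V : Type*} [AddCommGroup V]

section DivisionRing

variable [DivisionRing K] [Module K V]

theorem map_eq_self_of_forall_apply_eq_smul {f : V →ₗ[K] V} {L : Submodule K V} {c : K}
    (hc0 : c ≠ 0) (hc : ∀ v ∈ L, f v = c • v) : L.map f = L := by
  refine le_antisymm (map_le_iff_le_comap.mpr fun v hv => ?_) fun v hv => ?_
  · simpa [hc v hv] using L.smul_mem c hv
  · refine ⟨c⁻¹ • v, L.smul_mem _ hv, ?_⟩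
    rw [map_smul, hc v hv, smul_smul, inv_mul_cancel₀ hc0, one_smul]

end DivisionRing

section Field

variable [Field K] [Module K V]

theorem mem_or_mem_of_apply_eq_smul {f : V →ₗ[K] V} {L₁ L₂ : Submodule K V}
    (hcompl : IsCompl L₁ L₂) {a b c : K} (hab : a ≠ b)
    (ha : ∀ v ∈ L₁, f v = a • v) (hb : ∀ v ∈ L₂, f v = b • v) {w : V} (hw : f w = c • w) :
    w ∈ L₁ ∨ w ∈ L₂ := by
  obtain ⟨w₁, w₂, hw₁, hw₂, rfl⟩ := codisjoint_iff_exists_add_eq.mp hcompl.codisjoint w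
  have hdiff : (a - c) • w₁ = (c - b) • w₂ := by
    rw [map_add, ha w₁ hw₁, hb w₂ hw₂] at hw
    linear_combination (norm := module) hw
  have hzero : (a - c) • w₁ = 0 := by
    rw [← mem_bot K, ← hcompl.inf_eq_bot]
    exact ⟨smul_mem _ _ hw₁, hdiff ▸ smul_mem _ _ hw₂⟩
  by_cases hca : c = a
  · have hcb : c - b ≠ 0 := sub_ne_zero.mpr (hca ▸ hab)
    have hw₂0 : w₂ = 0 := (smul_eq_zero.mp (hdiff ▸ hzero)).resolve_left hcb
    exact .inl (by simpa [hw₂0] using hw₁)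
  · have hw₁0 : w₁ = 0 := (smul_eq_zero.mp hzero).resolve_left (sub_ne_zero.mpr (Ne.symm hca))
    exact .inr (by simpa [hw₁0] using hw₂)

theorem eq_or_eq_of_forall_apply_eq_smul {f : V →ₗ[K] V} {L L₁ L₂ : Submodule K V}
    (hL : Module.finrank K L = 1) (hL₁ : Module.finrank K L₁ = 1)
    (hL₂ : Module.finrank K L₂ = 1) (hcompl : IsCompl L₁ L₂) {a b c : K} (hab : a ≠ b)
    (ha : ∀ v ∈ L₁, f v = a • v) (hb : ∀ v ∈ L₂, f v = b • v) (hc : ∀ w ∈ L, f w = c • w) :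
    L = L₁ ∨ L = L₂ := by
  obtain ⟨w, hwL, hw0⟩ := L.ne_bot_iff.mp <| by rintro rfl; simp at hL
  rw [eq_span_singleton_of_mem_of_finrank_eq_one hL hwL hw0]
  refine (mem_or_mem_of_apply_eq_smul hcompl hab ha hb (hc w hwL)).imp (fun hw => ?_) fun hw => ?_
  · exact (eq_span_singleton_of_mem_of_finrank_eq_one hL₁ hw hw0).symm
  · exact (eq_span_singleton_of_mem_of_finrank_eq_one hL₂ hw hw0).symm

end Field

end Submodule

section Representation

variable {k V G : Type*} [Field k] [AddCommGroup V] [Module k V] [Group G]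
  (ρ : G →* (V ≃ₗ[k] V))

theorem apply_eq_smul_of_mem_map {g h : G} {L : Submodule k V} {c : k}
    (hc : ∀ v ∈ L, ρ (g⁻¹ * h * g) v = c • v) :
    ∀ w ∈ L.map (ρ g : V →ₗ[k] V), ρ h w = c • w := by
  rintro _ ⟨v, hv, rfl⟩
  have : ρ h (ρ g v) = ρ g (ρ (g⁻¹ * h * g) v) := by simp [LinearEquiv.mul_apply]
  rw [LinearEquiv.coe_coe, this, hc v hv, map_smul]

theorem map_eq_or_eq_of_conj_apply_eq_smul {L₁ L₂ : Submodule k V}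
    (hL₁ : Module.finrank k L₁ = 1) (hL₂ : Module.finrank k L₂ = 1) (hcompl : IsCompl L₁ L₂)
    {h : G} {a b c : k} (hab : a ≠ b) (ha : ∀ v ∈ L₁, ρ h v = a • v)
    (hb : ∀ v ∈ L₂, ρ h v = b • v) {g : G} (hc : ∀ v ∈ L₁, ρ (g⁻¹ * h * g) v = c • v) :
    L₁.map (ρ g : V →ₗ[k] V) = L₁ ∨ L₁.map (ρ g : V →ₗ[k] V) = L₂ :=
  Submodule.eq_or_eq_of_forall_apply_eq_smul (f := ρ h) ((LinearEquiv.finrank_map_eq _ _).trans hL₁)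
    hL₁ hL₂ hcompl hab ha hb (apply_eq_smul_of_mem_map ρ hc)

theorem exists_map_ne_self_of_irreducible
    (hirr : ∀ W : Submodule k V, (∀ g : G, ∀ v ∈ W, ρ g v ∈ W) → W = ⊥ ∨ W = ⊤)
    {L : Submodule k V} (hbot : L ≠ ⊥) (htop : L ≠ ⊤) :
    ∃ g : G, L.map (ρ g : V →ₗ[k] V) ≠ L := by
  by_contra! hfix
  refine (hirr L fun g v hv => ?_).elim hbot htop
  exact hfix g ▸ Submodule.mem_map_of_mem hv

end Representation

theorem induced_from_index_two_of_two_characters_general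
    {k V : Type*} [Field k] [AddCommGroup V] [Module k V]
    {G : Type*} [Group G]
    (ρ : G →* (V ≃ₗ[k] V))
    (hirr : ∀ W : Submodule k V, (∀ g : G, ∀ v ∈ W, ρ g v ∈ W) → W = ⊥ ∨ W = ⊤)
    (N : Subgroup G) [N.Normal]
    (L₁ L₂ : Submodule k V)
    (hL₁ : Module.finrank k L₁ = 1) (hL₂ : Module.finrank k L₂ = 1)
    (hcompl : IsCompl L₁ L₂)
    (χ₁ χ₂ : N →* kˣ) (hne : χ₁ ≠ χ₂)
    (h₁ : ∀ h : N, ∀ v ∈ L₁, ρ (h : G) v = χ₁ h • v)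
    (h₂ : ∀ h : N, ∀ v ∈ L₂, ρ (h : G) v = χ₂ h • v) :
    ∃ H : Subgroup G,
      (∀ g : G, g ∈ H ↔ Submodule.map (ρ g : V →ₗ[k] V) L₁ = L₁) ∧
      H.index = 2 ∧ N ≤ H ∧
      ∀ g : G, g ∉ H → Submodule.map (ρ g : V →ₗ[k] V) L₁ = L₂ := by
  -- `g • L` unfolds to `L.map (ρ g)`
  let : MulAction G (Submodule k V) := MulAction.compHom _ ρ
  obtain ⟨n₀, hn₀⟩ := DFunLike.ne_iff.mp hne
  have hmap : ∀ g : G, g • L₁ = L₁ ∨ g • L₁ = L₂ := fun g =>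
    map_eq_or_eq_of_conj_apply_eq_smul ρ hL₁ hL₂ hcompl (Units.val_injective.ne hn₀)
      (h₁ n₀) (h₂ n₀) (h₁ ⟨g⁻¹ * n₀ * g, by simpa using ‹N.Normal›.conj_mem _ n₀.2 g⁻¹⟩)
  have hL₁bot : L₁ ≠ ⊥ := by rintro rfl; simp at hL₁
  have hL₂bot : L₂ ≠ ⊥ := by rintro rfl; simp at hL₂
  have hL₁top : L₁ ≠ ⊤ := fun h => hL₂bot (eq_bot_of_top_isCompl (h ▸ hcompl))
  have hL₁₂ : L₁ ≠ L₂ := fun h => hL₁bot (disjoint_self.mp (h ▸ hcompl.disjoint))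
  have horbit : MulAction.orbit G L₁ = {L₁, L₂} := by
    obtain ⟨g₀, hg₀⟩ := exists_map_ne_self_of_irreducible ρ hirr hL₁bot hL₁top
    refine subset_antisymm (by rintro _ ⟨g, rfl⟩; exact hmap g) ?_
    exact Set.insert_subset (MulAction.mem_orbit_self L₁)
      (Set.singleton_subset_iff.mpr ⟨g₀, (hmap g₀).resolve_left hg₀⟩)
  refine ⟨MulAction.stabilizer G L₁, fun g => Iff.rfl, ?_, fun n hn => ?_,
    fun g hg => (hmap g).resolve_left hg⟩
  · rw [MulAction.index_stabilizer, horbit, Set.ncard_pair hL₁₂]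
  · exact Submodule.map_eq_self_of_forall_apply_eq_smul (χ₁ ⟨n, hn⟩).ne_zero (h₁ ⟨n, hn⟩)

/-- let `ρ` be an irreducible 2-dimensional representation of `G` whose
restriction to a normal subgroup `N` splits as a direct sum of two lines on which `N`
acts by distinct characters. Then the stabilizer of the first line is an index-2
subgroup `H` of `G` containing `N`, and every `g ∉ H` maps the first line to the
second. -/
theorem induced_from_index_two_of_two_characters
    {k V : Type*} [Field k] [AddCommGroup V] [Module k V]
    {G : Type*} [Group G]
    (hdim : Module.finrank k V = 2)
    (ρ : G →* (V ≃ₗ[k] V))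
    (hirr : ∀ W : Submodule k V, (∀ g : G, ∀ v ∈ W, ρ g v ∈ W) → W = ⊥ ∨ W = ⊤)
    (N : Subgroup G) [N.Normal]
    (L₁ L₂ : Submodule k V)
    (hL₁ : Module.finrank k L₁ = 1) (hL₂ : Module.finrank k L₂ = 1)
    (hcompl : IsCompl L₁ L₂)
    (χ₁ χ₂ : N →* kˣ) (hne : χ₁ ≠ χ₂)
    (h₁ : ∀ h : N, ∀ v ∈ L₁, ρ (h : G) v = χ₁ h • v)
    (h₂ : ∀ h : N, ∀ v ∈ L₂, ρ (h : G) v = χ₂ h • v) :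
    ∃ H : Subgroup G,
      (∀ g : G, g ∈ H ↔ Submodule.map (ρ g : V →ₗ[k] V) L₁ = L₁) ∧
      H.index = 2 ∧ N ≤ H ∧
      ∀ g : G, g ∉ H → Submodule.map (ρ g : V →ₗ[k] V) L₁ = L₂ :=
  induced_from_index_two_of_two_characters_general ρ hirr N L₁ L₂ hL₁ hL₂ hcompl χ₁ χ₂ hne h₁ h₂
end

section
/- Let k be a field, V a 3-dimensional k-vector space, G a group, and ρ : G → GL(V) a homomorphism with no G-invariant subspace other than 0 and V. Let N be a normal subgroup of G, and suppose V = W₁ ⊕ W₂ where W₁ is a 1-dimensional subspace invariant under ρ(h) for all h ∈ N, and W₂ is a 2-dimensional subspace invariant under ρ(h) for all h ∈ N having no N-invariant subspace other than 0 and W₂. Then a contradiction (False) follows. (This is the dimension-count step in the paper's proof of strong irreducibility in the GL₃ case: the restriction of an irreducible 3-dimensional representation to a normal subgroup cannot decompose as the direct sum of a 1-dimensional and an irreducible 2-dimensional summand, since the summands cannot be switched for dimension reasons and hence would be G-invariant.) -/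
/-- an irreducible 3-dimensional representation of `G` cannot restrict,
on a normal subgroup `N`, to the direct sum of a 1-dimensional `N`-invariant subspace
and an irreducible 2-dimensional `N`-invariant subspace. -/
theorem no_one_plus_two_decomposition_on_normal_subgroup
    {k V : Type*} [Field k] [AddCommGroup V] [Module k V]
    {G : Type*} [Group G]
    (hdim : Module.finrank k V = 3)
    (ρ : G →* (V ≃ₗ[k] V))
    (hirr : ∀ W : Submodule k V, (∀ g : G, ∀ v ∈ W, ρ g v ∈ W) → W = ⊥ ∨ W = ⊤)
    (N : Subgroup G) [N.Normal]
    (W₁ W₂ : Submodule k V)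
    (hW₁ : Module.finrank k W₁ = 1) (hW₂ : Module.finrank k W₂ = 2)
    (hcompl : IsCompl W₁ W₂)
    (hinv₁ : ∀ h ∈ N, ∀ v ∈ W₁, ρ h v ∈ W₁)
    (hinv₂ : ∀ h ∈ N, ∀ v ∈ W₂, ρ h v ∈ W₂)
    (hirr₂ : ∀ W : Submodule k V, W ≤ W₂ →
      (∀ h ∈ N, ∀ v ∈ W, ρ h v ∈ W) → W = ⊥ ∨ W = W₂) :
    False := by
  haveI : Module.Finite k V := Module.finite_of_finrank_pos (by omega)
  -- Key: any 1-dimensional N-invariant subspace equals W₁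
  have key : ∀ L : Submodule k V, Module.finrank k L = 1 →
      (∀ h ∈ N, ∀ v ∈ L, ρ h v ∈ L) → L = W₁ := by
    intro L hL hLinv
    by_contra hne
    set M := L ⊔ W₁ with hM
    have hMinv : ∀ h ∈ N, ∀ v ∈ M, ρ h v ∈ M := by
      intro h hh v hv
      rcases Submodule.mem_sup.1 hv with ⟨x, hx, y, hy, rfl⟩
      rw [map_add]
      exact M.add_mem (Submodule.mem_sup_left (hLinv h hh x hx))
        (Submodule.mem_sup_right (hinv₁ h hh y hy))
    -- M ⊓ W₂ is N-invariant and ≤ W₂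
    have hcase := hirr₂ (M ⊓ W₂) inf_le_right (by
      intro h hh v hv
      exact ⟨hMinv h hh v hv.1, hinv₂ h hh v hv.2⟩)
    have hMle : Module.finrank k M ≤ 2 := by
      have := Submodule.finrank_sup_add_finrank_inf_eq L W₁
      rw [← hM] at this
      omega
    have hMge : 2 ≤ Module.finrank k M := by
      have hlt : W₁ < M := by
        refine lt_of_le_of_ne le_sup_right ?_
        intro heq
        exact hne (Submodule.eq_of_le_of_finrank_eq (heq ▸ le_sup_left) (by omega))
      have := Submodule.finrank_lt_finrank_of_lt hlt
      omega
    rcases hcase with hbot | htop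
    · -- M ⊓ W₂ = ⊥ : dim (M ⊔ W₂) = dim M + dim W₂ ≥ 4 > 3
      have hsum := Submodule.finrank_sup_add_finrank_inf_eq M W₂
      rw [hbot] at hsum
      simp [finrank_bot] at hsum
      have hle : Module.finrank k ↥(M ⊔ W₂) ≤ Module.finrank k V :=
        Submodule.finrank_le _
      omega
    · -- W₂ ≤ M, but also W₁ ≤ M, so ⊤ = W₁ ⊔ W₂ ≤ M, dim 3 ≤ 2
      have hW₂le : W₂ ≤ M := by
        rw [← htop]; exact inf_le_left
      have htop' : M = ⊤ := by
        rw [← top_le_iff, ← hcompl.sup_eq_top]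
        exact sup_le le_sup_right hW₂le
      rw [htop', finrank_top] at hMle
      omega
  -- hence W₁ is G-invariant
  have hG : ∀ g : G, ∀ v ∈ W₁, ρ g v ∈ W₁ := by
    intro g v hv
    have hmap : Submodule.map (ρ g : V →ₗ[k] V) W₁ = W₁ := by
      apply key
      · rw [LinearEquiv.finrank_map_eq]; exact hW₁
      · rintro h hh w ⟨x, hx, rfl⟩
        refine ⟨ρ (g⁻¹ * h * g) x, hinv₁ _ (Subgroup.Normal.conj_mem' ‹N.Normal› h hh g) x hx, ?_⟩
        have : ρ g (ρ (g⁻¹ * h * g) x) = ρ h (ρ g x) := by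
          show (ρ g * ρ (g⁻¹ * h * g)) x = (ρ h * ρ g) x
          rw [← map_mul, ← map_mul]
          congr 1
          group
        simpa using this
    rw [← hmap]
    exact ⟨v, hv, rfl⟩
  rcases hirr W₁ hG with h | h
  · rw [h, finrank_bot] at hW₁; omega
  · rw [h, finrank_top] at hW₁; omega
end

section
/- Let k be a field, V a 3-dimensional k-vector space, G a group, and ρ : G → GL(V) a homomorphism with no G-invariant subspace other than 0 and V. Let N be a normal subgroup of G and suppose V = L₁ ⊕ L₂ ⊕ L₃ where L₁, L₂, L₃ are 1-dimensional subspaces and there are pairwise distinct characters χ₁, χ₂, χ₃ : N → kˣ with ρ(h)v = χᵢ(h)·v for all h ∈ N and v ∈ Lᵢ (i = 1, 2, 3). Then H := {g ∈ G : ρ(g)L₁ = L₁} is a subgroup of G of index 3 containing N, and there exist g₂, g₃ ∈ G with ρ(g₂)L₁ = L₂ and ρ(g₃)L₁ = L₃ (so V = L₁ ⊕ ρ(g₂)L₁ ⊕ ρ(g₃)L₁). (This is the Clifford-theoretic core of the paper's proof that the Galois representation attached to a non-self-twist regular algebraic cuspidal automorphic representation of GL₃ is strongly irreducible: if the restriction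 to an open normal subgroup splits as three distinct characters, G permutes the lines transitively and the representation is induced from an index-3 subgroup.) -/
/-!
Write `V_ψ` for the common eigenspace of `N` with character `ψ`. Since `N` is normal, `ρ g` maps
`V_χ` into `V_{χ ∘ (g⁻¹ · g)}`. Weight spaces respect direct sums of `N`-invariant subspaces, so
`V_ψ = ⨆ᵢ (Lᵢ ⊓ V_ψ)`, and as the `χᵢ` are distinct every `V_ψ` lies in a single `Lᵢ`.
Hence `G` permutes `{L₁, L₂, L₃}`. The lines in the orbit of `L₁` span a nonzero invariant
subspace, which is `V` by irreducibility; two lines span at most a plane, so the orbit consists of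
all three lines and orbit–stabilizer gives index `3`.
-/

open Module
open scoped Pointwise

section WeightSpace

variable {k V N : Type*} [Field k] [AddCommGroup V] [Module k V] [Monoid N]

def weightSpace (σ : N →* (V ≃ₗ[k] V)) (χ : N →* kˣ) : Submodule k V :=
  ⨅ h, End.eigenspace (σ h : End k V) (χ h)

variable {σ : N →* (V ≃ₗ[k] V)} {χ ψ : N →* kˣ}

theorem mem_weightSpace {v : V} : v ∈ weightSpace σ χ ↔ ∀ h, σ h v = χ h • v := by
  simp [weightSpace, Units.smul_def]

theorem disjoint_weightSpace (hχψ : χ ≠ ψ) :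
    Disjoint (weightSpace σ χ) (weightSpace σ ψ) := by
  refine Submodule.disjoint_def.mpr fun v hχ hψ => ?_
  obtain ⟨h, hh⟩ := DFunLike.ne_iff.mp hχψ
  by_contra hv
  refine hh (Units.ext (smul_left_injective k hv ?_))
  simpa [Units.smul_def] using (mem_weightSpace.mp hχ h).symm.trans (mem_weightSpace.mp hψ h)

theorem mem_invtSubmodule_of_le_weightSpace {L : Submodule k V} (hL : L ≤ weightSpace σ χ)
    (h : N) : L ∈ End.invtSubmodule (σ h : End k V) := fun v hv => by
  simpa [mem_weightSpace.mp (hL hv) h] using L.smul_mem (χ h) hv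

theorem sup_inf_weightSpace {A B : Submodule k V}
    (hA : ∀ h, A ∈ End.invtSubmodule (σ h : End k V))
    (hB : ∀ h, B ∈ End.invtSubmodule (σ h : End k V)) (hAB : Disjoint A B) :
    (A ⊔ B) ⊓ weightSpace σ χ = A ⊓ weightSpace σ χ ⊔ B ⊓ weightSpace σ χ := by
  refine le_antisymm ?_
    (le_inf (sup_le_sup inf_le_left inf_le_left) (sup_le inf_le_right inf_le_right))
  rintro v ⟨hv, hvχ⟩
  obtain ⟨a, ha, b, hb, rfl⟩ := Submodule.mem_sup.mp hv
  have ha' : a ∈ weightSpace σ χ := by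
    refine mem_weightSpace.mpr fun h => sub_eq_zero.mp (Submodule.disjoint_def.mp hAB _
      (A.sub_mem (hA h ha) (A.smul_mem _ ha)) ?_)
    -- `σ h a - χ h • a ∈ A` equals `χ h • b - σ h b ∈ B`, so both vanish
    have hab := mem_weightSpace.mp hvχ h
    rw [map_add, smul_add] at hab
    rw [show σ h a - χ h • a = χ h • b - σ h b by rw [sub_eq_sub_iff_add_eq_add, hab, add_comm]]
    exact B.sub_mem (B.smul_mem _ hb) (hB h hb)
  have hb' : b ∈ weightSpace σ χ := by simpa using (weightSpace σ χ).sub_mem hvχ ha'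
  exact Submodule.add_mem_sup ⟨ha, ha'⟩ ⟨hb, hb'⟩

end WeightSpace

theorem map_eq_of_le_weightSpace {k V N : Type*} [Field k] [AddCommGroup V] [Module k V]
    [Group N] {σ : N →* (V ≃ₗ[k] V)} {χ : N →* kˣ} {L : Submodule k V}
    (hL : L ≤ weightSpace σ χ) (h : N) : L.map (σ h : V →ₗ[k] V) = L := by
  refine le_antisymm ((End.mem_invtSubmodule_iff_map_le _).mp
    (mem_invtSubmodule_of_le_weightSpace hL h)) (End.mem_invtSubmodule_symm_iff_le_map.mp ?_)
  have hinv := mem_invtSubmodule_of_le_weightSpace hL h⁻¹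
  rw [map_inv] at hinv
  exact hinv

theorem map_le_weightSpace_conj {k V G : Type*} [Field k] [AddCommGroup V] [Module k V] [Group G]
    (ρ : G →* (V ≃ₗ[k] V)) {N : Subgroup G} [N.Normal] (g : G) (χ : N →* kˣ) :
    (weightSpace (ρ.comp N.subtype) χ).map (ρ g : V →ₗ[k] V) ≤
      weightSpace (ρ.comp N.subtype) (χ.comp (MulAut.conjNormal g⁻¹).toMonoidHom) := by
  rintro _ ⟨v, hv, rfl⟩
  refine mem_weightSpace.mpr fun h => ?_
  have hconj : (h : G) * g = g * (MulAut.conjNormal g⁻¹ h : N) := by simp [mul_assoc]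
  have hv' := mem_weightSpace.mp hv (MulAut.conjNormal g⁻¹ h)
  simp only [MonoidHom.comp_apply, Subgroup.coe_subtype] at hv' ⊢
  rw [LinearEquiv.coe_coe, ← LinearEquiv.mul_apply, ← map_mul, hconj, map_mul,
    LinearEquiv.mul_apply, hv']
  simp [Units.smul_def]

section ThreeLines

variable {k V N : Type*} [Field k] [AddCommGroup V] [Module k V] [Monoid N]
  {σ : N →* (V ≃ₗ[k] V)} {L₁ L₂ L₃ : Submodule k V} {χ₁ χ₂ χ₃ : N →* kˣ}

theorem weightSpace_le_or_le_or_le (hcompl : IsCompl L₁ (L₂ ⊔ L₃)) (hcompl' : IsCompl L₂ L₃)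
    (h₁ : L₁ ≤ weightSpace σ χ₁) (h₂ : L₂ ≤ weightSpace σ χ₂) (h₃ : L₃ ≤ weightSpace σ χ₃)
    (hne₁₂ : χ₁ ≠ χ₂) (hne₁₃ : χ₁ ≠ χ₃) (hne₂₃ : χ₂ ≠ χ₃) (ψ : N →* kˣ) :
    weightSpace σ ψ ≤ L₁ ∨ weightSpace σ ψ ≤ L₂ ∨ weightSpace σ ψ ≤ L₃ := by
  have hdecomp : weightSpace σ ψ =
      L₁ ⊓ weightSpace σ ψ ⊔ (L₂ ⊓ weightSpace σ ψ ⊔ L₃ ⊓ weightSpace σ ψ) := by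
    have hinv₂ := mem_invtSubmodule_of_le_weightSpace h₂
    have hinv₃ := mem_invtSubmodule_of_le_weightSpace h₃
    rw [← sup_inf_weightSpace hinv₂ hinv₃ hcompl'.disjoint,
      ← sup_inf_weightSpace (mem_invtSubmodule_of_le_weightSpace h₁)
        (fun h => Sublattice.sup_mem (hinv₂ h) (hinv₃ h)) hcompl.disjoint, hcompl.sup_eq_top,
      top_inf_eq]
  have hbot : ∀ {L χ}, L ≤ weightSpace σ χ → χ ≠ ψ → L ⊓ weightSpace σ ψ = ⊥ :=
    fun hL hχ => ((disjoint_weightSpace hχ).mono_left hL).eq_bot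
  by_cases hψ₁ : χ₁ = ψ
  · subst hψ₁
    left
    rw [hdecomp, hbot h₂ hne₁₂.symm, hbot h₃ hne₁₃.symm]
    simp
  by_cases hψ₂ : χ₂ = ψ
  · subst hψ₂
    right; left
    rw [hdecomp, hbot h₁ hne₁₂, hbot h₃ hne₂₃.symm]
    simp
  right; right
  rw [hdecomp, hbot h₁ hψ₁, hbot h₂ hψ₂]
  simp

theorem mem_of_le_weightSpace [FiniteDimensional k V] (hcompl : IsCompl L₁ (L₂ ⊔ L₃))
    (hcompl' : IsCompl L₂ L₃) (hL₁ : finrank k L₁ = 1) (hL₂ : finrank k L₂ = 1)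
    (hL₃ : finrank k L₃ = 1) (h₁ : L₁ ≤ weightSpace σ χ₁) (h₂ : L₂ ≤ weightSpace σ χ₂)
    (h₃ : L₃ ≤ weightSpace σ χ₃) (hne₁₂ : χ₁ ≠ χ₂) (hne₁₃ : χ₁ ≠ χ₃) (hne₂₃ : χ₂ ≠ χ₃)
    {W : Submodule k V} (hW : finrank k W = 1) {ψ : N →* kˣ} (hWψ : W ≤ weightSpace σ ψ) :
    W ∈ ({L₁, L₂, L₃} : Set (Submodule k V)) := by
  rcases weightSpace_le_or_le_or_le hcompl hcompl' h₁ h₂ h₃ hne₁₂ hne₁₃ hne₂₃ ψ with h | h | h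
  · exact .inl (Submodule.eq_of_le_of_finrank_eq (hWψ.trans h) (hW.trans hL₁.symm))
  · exact .inr (.inl (Submodule.eq_of_le_of_finrank_eq (hWψ.trans h) (hW.trans hL₂.symm)))
  · exact .inr (.inr (Submodule.eq_of_le_of_finrank_eq (hWψ.trans h) (hW.trans hL₃.symm)))

end ThreeLines

section Irreducible

variable {k V G : Type*} [Field k] [AddCommGroup V] [Module k V] [Monoid G]
  {ρ : G →* (V ≃ₗ[k] V)}

theorem iSup_map_eq_top_of_irreducible
    (hirr : ∀ W : Submodule k V, (∀ g : G, ∀ v ∈ W, ρ g v ∈ W) → W = ⊥ ∨ W = ⊤)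
    {W : Submodule k V} (hW : W ≠ ⊥) : ⨆ g, W.map (ρ g : V →ₗ[k] V) = ⊤ := by
  refine (hirr _ fun g => ?_).resolve_left fun h => hW (eq_bot_iff.mpr ?_)
  · have hmap : (⨆ g', W.map (ρ g' : V →ₗ[k] V)).map (ρ g : V →ₗ[k] V) ≤
        ⨆ g', W.map (ρ g' : V →ₗ[k] V) := by
      rw [Submodule.map_iSup]
      refine iSup_le fun g' => le_iSup_of_le (g * g') ?_
      rw [← Submodule.map_comp, map_mul]
      rfl
    exact fun v hv => Submodule.map_le_iff_le_comap.mp hmap hv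
  · exact h ▸ le_iSup_of_le 1 (by simp)

theorem exists_map_eq_of_forall_map_mem [FiniteDimensional k V]
    (hirr : ∀ W : Submodule k V, (∀ g : G, ∀ v ∈ W, ρ g v ∈ W) → W = ⊥ ∨ W = ⊤)
    {W A B C : Submodule k V} (hW : W ≠ ⊥) (hAB : finrank k A + finrank k B < finrank k V)
    (h : ∀ g, W.map (ρ g : V →ₗ[k] V) ∈ ({A, B, C} : Set (Submodule k V))) :
    ∃ g, W.map (ρ g : V →ₗ[k] V) = C := by
  by_contra! hC
  have hle : ⨆ g, W.map (ρ g : V →ₗ[k] V) ≤ A ⊔ B := iSup_le fun g => by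
    rcases h g with hg | hg | hg
    · exact hg ▸ le_sup_left
    · exact hg ▸ le_sup_right
    · exact absurd hg (hC g)
  rw [iSup_map_eq_top_of_irreducible hirr hW] at hle
  have := (Submodule.finrank_mono hle).trans (Submodule.finrank_add_le_finrank_add_finrank A B)
  rw [finrank_top] at this
  omega

end Irreducible

/-- let `ρ` be an irreducible 3-dimensional representation of `G` whose
restriction to a normal subgroup `N` splits as a direct sum of three lines on which `N`
acts by pairwise distinct characters. Then the stabilizer of the first line is an
index-3 subgroup `H` of `G` containing `N`, and there are `g₂, g₃ ∈ G` carrying the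
first line onto the second and third lines respectively. -/
theorem induced_from_index_three_of_three_characters
    {k V : Type*} [Field k] [AddCommGroup V] [Module k V]
    {G : Type*} [Group G]
    (hdim : Module.finrank k V = 3)
    (ρ : G →* (V ≃ₗ[k] V))
    (hirr : ∀ W : Submodule k V, (∀ g : G, ∀ v ∈ W, ρ g v ∈ W) → W = ⊥ ∨ W = ⊤)
    (N : Subgroup G) [N.Normal]
    (L₁ L₂ L₃ : Submodule k V)
    (hL₁ : Module.finrank k L₁ = 1) (hL₂ : Module.finrank k L₂ = 1)
    (hL₃ : Module.finrank k L₃ = 1)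
    (hcompl : IsCompl L₁ (L₂ ⊔ L₃)) (hcompl' : IsCompl L₂ L₃)
    (χ₁ χ₂ χ₃ : N →* kˣ)
    (hne₁₂ : χ₁ ≠ χ₂) (hne₁₃ : χ₁ ≠ χ₃) (hne₂₃ : χ₂ ≠ χ₃)
    (h₁ : ∀ h : N, ∀ v ∈ L₁, ρ (h : G) v = χ₁ h • v)
    (h₂ : ∀ h : N, ∀ v ∈ L₂, ρ (h : G) v = χ₂ h • v)
    (h₃ : ∀ h : N, ∀ v ∈ L₃, ρ (h : G) v = χ₃ h • v) :
    ∃ H : Subgroup G,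
      (∀ g : G, g ∈ H ↔ Submodule.map (ρ g : V →ₗ[k] V) L₁ = L₁) ∧
      H.index = 3 ∧ N ≤ H ∧
      ∃ g₂ g₃ : G, Submodule.map (ρ g₂ : V →ₗ[k] V) L₁ = L₂ ∧ Submodule.map (ρ g₃ : V →ₗ[k] V) L₁ = L₃ := by
  have : FiniteDimensional k V := .of_finrank_eq_succ hdim
  -- `g • W` is `W.map (ρ g)` by definition, so `H` is the stabilizer of `L₁`
  let _ : MulAction G (Submodule k V) := MulAction.compHom _ ρ
  have hχ₁ : L₁ ≤ weightSpace (ρ.comp N.subtype) χ₁ := fun v hv => mem_weightSpace.mpr (h₁ · v hv)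
  have hχ₂ : L₂ ≤ weightSpace (ρ.comp N.subtype) χ₂ := fun v hv => mem_weightSpace.mpr (h₂ · v hv)
  have hχ₃ : L₃ ≤ weightSpace (ρ.comp N.subtype) χ₃ := fun v hv => mem_weightSpace.mpr (h₃ · v hv)
  have hmem (g : G) : L₁.map (ρ g : V →ₗ[k] V) ∈ ({L₁, L₂, L₃} : Set (Submodule k V)) :=
    mem_of_le_weightSpace hcompl hcompl' hL₁ hL₂ hL₃ hχ₁ hχ₂ hχ₃ hne₁₂ hne₁₃ hne₂₃
      (by rw [LinearEquiv.finrank_map_eq, hL₁])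
      ((Submodule.map_mono hχ₁).trans (map_le_weightSpace_conj ρ g χ₁))
  have hne_bot {L : Submodule k V} (hL : finrank k L = 1) : L ≠ ⊥ := by
    rintro rfl
    simp at hL
  obtain ⟨g₂, hg₂⟩ := exists_map_eq_of_forall_map_mem (A := L₁) (B := L₃) hirr (hne_bot hL₁)
    (by omega) fun g => Set.pair_comm L₂ L₃ ▸ hmem g
  obtain ⟨g₃, hg₃⟩ := exists_map_eq_of_forall_map_mem (A := L₁) (B := L₂) hirr (hne_bot hL₁)
    (by omega) hmem
  have horbit : MulAction.orbit G L₁ = {L₁, L₂, L₃} := by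
    refine (Set.range_subset_iff.mpr hmem).antisymm ?_
    rintro L (rfl | rfl | rfl)
    exacts [MulAction.mem_orbit_self L, ⟨g₂, hg₂⟩, ⟨g₃, hg₃⟩]
  refine ⟨MulAction.stabilizer G L₁, fun g => Iff.rfl, ?_,
    fun h hh => map_eq_of_le_weightSpace hχ₁ ⟨h, hh⟩, g₂, g₃, hg₂, hg₃⟩
  rw [MulAction.index_stabilizer, horbit, Set.ncard_eq_three]
  exact ⟨L₁, L₂, L₃, (hcompl.disjoint.mono_right le_sup_left).ne (hne_bot hL₁),
    (hcompl.disjoint.mono_right le_sup_right).ne (hne_bot hL₁),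
    hcompl'.disjoint.ne (hne_bot hL₂), rfl⟩
end
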